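/- arXiv:1610.08994 — 2 statements merged into one kernel-verified Lean document; each statement's English description precedes it below -/
import Mathlib

section
/- Let G = B wr X be a wreath product of abelian groups with X torsion-free and B nontrivial, let H ≤ G have finite index m, and let f : H → G be a simple virtual endomorphism. If x ∈ X is nontrivial, then f(x^m) is nontrivial. -/
def shiftEquiv {B X : Type*} [AddCommGroup B] [AddCommGroup X] (x : X) :
    (X →₀ B) ≃+ (X →₀ B) := Finsupp.domCongr (Equiv.addRight x)

noncomputable def shiftHom (B X : Type*) [AddCommGroup B] [AddCommGroup X] :
    Multiplicative X →* Multiplicative (AddAut (X →₀ B)) :=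
  MonoidHom.mk' (fun x => Multiplicative.ofAdd (shiftEquiv x.toAdd)) (by
    intro a b
    show (shiftEquiv (a * b).toAdd : AddAut (X →₀ B)) = shiftEquiv a.toAdd + shiftEquiv b.toAdd
    apply AddEquiv.ext
    intro f
    ext y
    simp [shiftEquiv, Finsupp.domCongr, Equiv.Perm.mul_def, sub_eq_add_neg, AddAut.add_apply]
    congr 1
    abel)

noncomputable def wreathAct (B X : Type*) [AddCommGroup B] [AddCommGroup X] :
    Multiplicative X →* MulAut (Multiplicative (X →₀ B)) :=
  { toFun := fun x => AddEquiv.toMultiplicative (Multiplicative.toAdd (shiftHom B X x))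
    map_one' := by ext f; simp
    map_mul' := by intro a b; ext f; simp }

/-- The old Mathlib `AddMonoid.IsTorsionFree`, removed since; restored with its old meaning. -/
def AddMonoid.IsTorsionFree (G : Type*) [AddMonoid G] : Prop :=
  ∀ g : G, g ≠ 0 → ¬IsOfFinAddOrder g

abbrev Wreath (B X : Type*) [AddCommGroup B] [AddCommGroup X] :=
  SemidirectProduct (Multiplicative (X →₀ B)) (Multiplicative X) (wreathAct B X)

/-! Suppose `f` kills `t = x^m = inr (m • x)`. Then `f` kills every commutator `⁅t, n⁆` with
`n ∈ H`. Let `N` be the normal core of `H`. The commutators `⁅t, inl a⁆` with `inl a ∈ N` are the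
image of `N ∩ A` (with `A = X →₀ B` the base group) under `a ↦ a(· - m • x) - a`; they form a
normal, `f`-invariant subgroup of `H`, which is therefore trivial. But `N ∩ A` has finite index in
the infinite group `A`, so it is nontrivial, and `a ↦ a(· - m • x) - a` is injective since a
finitely supported function cannot be invariant under a translation of infinite order. -/

open scoped commutatorElement

namespace SemidirectProduct

theorem conj_inl {N G : Type*} [CommGroup N] [Group G] {φ : G →* MulAut N}
    (g : N ⋊[φ] G) (n : N) : g * inl n * g⁻¹ = inl (φ g.right n) := by
  ext <;> simp [mul_comm]

end SemidirectProduct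

theorem MonoidHom.map_commutatorElement_eq_one {G G' : Type*} [Group G] [Group G']
    {H : Subgroup G} (f : H →* G') {t n : G} (ht : t ∈ H) (hn : n ∈ H) (hft : f ⟨t, ht⟩ = 1)
    (h : ⁅t, n⁆ ∈ H) : f ⟨⁅t, n⁆, h⟩ = 1 := by
  change f ⁅(⟨t, ht⟩ : H), ⟨n, hn⟩⁆ = 1
  rw [map_commutatorElement, hft, commutatorElement_one_left]

namespace Wreath

open SemidirectProduct

variable {B X : Type*} [AddCommGroup B] [AddCommGroup X]

lemma shiftEquiv_apply (s : X) (a : X →₀ B) (y : X) : shiftEquiv s a y = a (y - s) := by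
  simp [shiftEquiv, sub_eq_add_neg]

lemma support_shiftEquiv (s : X) (a : X →₀ B) :
    (shiftEquiv s a).support = a.support.map (Equiv.addRight s).toEmbedding :=
  rfl

lemma shiftEquiv_comm (r s : X) (a : X →₀ B) :
    shiftEquiv r (shiftEquiv s a) = shiftEquiv s (shiftEquiv r a) := by
  ext y
  simp only [shiftEquiv_apply, sub_right_comm]

-- Summing over the support: invariance under `+ s` forces `#a.support • s = 0`.
lemma eq_zero_of_shiftEquiv_eq_self {s : X} (hs : ¬IsOfFinAddOrder s) {a : X →₀ B}
    (h : shiftEquiv s a = a) : a = 0 := by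
  have hsum := congrArg (fun S : Finset X => ∑ y ∈ S, y) (support_shiftEquiv s a)
  simp only [h, Finset.sum_map, Equiv.coe_toEmbedding, Equiv.coe_addRight, Finset.sum_add_distrib,
    Finset.sum_const, left_eq_add] at hsum
  rw [← Finsupp.support_eq_empty, ← Finset.card_eq_zero]
  by_contra hne
  exact hs (isOfFinAddOrder_iff_nsmul_eq_zero.mpr ⟨_, Nat.pos_of_ne_zero hne, hsum⟩)

noncomputable def shiftSub (s : X) : (X →₀ B) →+ (X →₀ B) :=
  (shiftEquiv (B := B) s).toAddMonoidHom - AddMonoidHom.id _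

lemma shiftSub_apply (s : X) (a : X →₀ B) : shiftSub s a = shiftEquiv s a - a := rfl

lemma shiftSub_injective {s : X} (hs : ¬IsOfFinAddOrder s) :
    Function.Injective (shiftSub (B := B) s) :=
  (injective_iff_map_eq_zero _).mpr fun _ ha =>
    eq_zero_of_shiftEquiv_eq_self hs (sub_eq_zero.mp ha)

lemma shiftSub_shiftEquiv (r s : X) (a : X →₀ B) :
    shiftSub s (shiftEquiv r a) = shiftEquiv r (shiftSub s a) := by
  rw [shiftSub_apply, shiftSub_apply, map_sub, shiftEquiv_comm]

lemma commutatorElement_inr_inl (s : X) (a : Multiplicative (X →₀ B)) :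
    ⁅(inr (Multiplicative.ofAdd s) : Wreath B X), inl a⁆ =
      (inl (AddMonoidHom.toMultiplicative (shiftSub s) a) : Wreath B X) := by
  rw [commutatorElement_def, conj_inl, ← map_inv, ← map_mul]
  exact congrArg inl (congrArg Multiplicative.ofAdd (sub_eq_add_neg _ _)).symm

noncomputable def baseCommutators (s : X) (N : Subgroup (Wreath B X)) :
    Subgroup (Wreath B X) :=
  (N.comap inl).map (inl.comp (AddMonoidHom.toMultiplicative (shiftSub s)))

lemma mem_baseCommutators {s : X} {N : Subgroup (Wreath B X)} {g : Wreath B X} :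
    g ∈ baseCommutators s N ↔ ∃ a : Multiplicative (X →₀ B), (inl a : Wreath B X) ∈ N ∧
      ⁅(inr (Multiplicative.ofAdd s) : Wreath B X), inl a⁆ = g := by
  simp only [baseCommutators, Subgroup.mem_map, Subgroup.mem_comap, MonoidHom.comp_apply,
    commutatorElement_inr_inl]

lemma baseCommutators_le (s : X) (N : Subgroup (Wreath B X)) [N.Normal] :
    baseCommutators s N ≤ N := by
  intro g hg
  obtain ⟨a, ha, rfl⟩ := mem_baseCommutators.mp hg
  exact Subgroup.commutator_le_right _ N
    (Subgroup.commutator_mem_commutator (Subgroup.mem_top _) ha)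

lemma baseCommutators_normal (s : X) (N : Subgroup (Wreath B X)) [hN : N.Normal] :
    (baseCommutators s N).Normal := by
  constructor
  intro k hk g
  obtain ⟨a, ha, rfl⟩ := mem_baseCommutators.mp hk
  refine mem_baseCommutators.mpr ⟨wreathAct B X g.right a, ?_, ?_⟩
  · rw [← conj_inl]
    exact hN.conj_mem _ ha g
  · rw [commutatorElement_inr_inl, commutatorElement_inr_inl, conj_inl]
    exact congrArg inl (congrArg Multiplicative.ofAdd (shiftSub_shiftEquiv _ _ _))

lemma baseCommutators_ne_bot [Nontrivial B] {s : X} (hs : ¬IsOfFinAddOrder s)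
    (N : Subgroup (Wreath B X)) [N.FiniteIndex] : baseCommutators s N ≠ ⊥ := by
  have : Infinite X := Infinite.of_injective _ (injective_nsmul_iff_not_isOfFinAddOrder.mpr hs)
  have hinj : Function.Injective ((inl : Multiplicative (X →₀ B) →* Wreath B X).comp
      (AddMonoidHom.toMultiplicative (shiftSub s))) :=
    inl_injective.comp (shiftSub_injective hs)
  intro hK
  have hbot := (Subgroup.map_eq_bot_iff_of_injective _ hinj).mp hK
  have : N.IsFiniteRelIndex (inl : Multiplicative (X →₀ B) →* Wreath B X).range :=
    N.isFiniteRelIndex_of_finiteIndex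
  have hindex := Subgroup.index_comap N (inl : Multiplicative (X →₀ B) →* Wreath B X)
  rw [hbot, Subgroup.index_bot, Nat.card_eq_zero_of_infinite] at hindex
  exact Subgroup.relIndex_ne_zero hindex.symm

end Wreath

/-- In a self-similar `G = B wr X` (via a simple virtual endomorphism
`f : H → G`, `[G:H] = m`) with `B` nontrivial abelian and `X` torsion-free abelian,
if `x ∈ X` is nontrivial then `f(x^m)` is nontrivial. -/
theorem stmt8 {B X : Type*} [AddCommGroup B] [AddCommGroup X] [Nontrivial B]
    (hX : AddMonoid.IsTorsionFree X)
    (H : Subgroup (Wreath B X)) [H.FiniteIndex] (f : H →* Wreath B X)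
    (hsimple : ∀ K : Subgroup (Wreath B X), K.Normal → ∀ hK : K ≤ H,
      (∀ k (hk : k ∈ K), f ⟨k, hK hk⟩ ∈ K) → K = ⊥)
    (x : X) (hx : x ≠ 0)
    (hmem : (SemidirectProduct.inr (Multiplicative.ofAdd x) : Wreath B X) ^ H.index ∈ H) :
    f ⟨(SemidirectProduct.inr (Multiplicative.ofAdd x) : Wreath B X) ^ H.index, hmem⟩ ≠ 1 := by
  intro hft
  have hs : ¬IsOfFinAddOrder (H.index • x) := fun h =>
    hX x hx (h.of_nsmul Subgroup.FiniteIndex.index_ne_zero)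
  have ht : (SemidirectProduct.inr (Multiplicative.ofAdd x) : Wreath B X) ^ H.index =
      SemidirectProduct.inr (Multiplicative.ofAdd (H.index • x)) := by
    rw [← map_pow, ← ofAdd_nsmul]
  set K := Wreath.baseCommutators (H.index • x) H.normalCore
  have hKH : K ≤ H := (Wreath.baseCommutators_le _ _).trans H.normalCore_le
  refine Wreath.baseCommutators_ne_bot hs H.normalCore
    (hsimple K (Wreath.baseCommutators_normal _ _) hKH ?_)
  intro k hk
  obtain ⟨a, ha, rfl⟩ := Wreath.mem_baseCommutators.mp hk
  rw [f.map_commutatorElement_eq_one (ht ▸ hmem) (H.normalCore_le ha) (by simpa only [← ht])]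
  exact K.one_mem
end

section
/- Let G = B wr X with B, X abelian, X torsion-free nontrivial, and A the base group. If [A^m, X^m] = 1 for some m ≥ 1, then A^m = 1, i.e., B has exponent dividing m. -/
theorem AddMonoid.IsTorsionFree.nsmul_ne_zero {X : Type*} [AddMonoid X]
    (hX : AddMonoid.IsTorsionFree X) {m : ℕ} (hm : m ≠ 0) {x : X} (hx : x ≠ 0) : m • x ≠ 0 :=
  fun h => hX x hx (isOfFinAddOrder_iff_nsmul_eq_zero.2 ⟨m, Nat.pos_of_ne_zero hm, h⟩)

theorem shiftEquiv_single {B X : Type*} [AddCommGroup B] [AddCommGroup X] (x y : X) (b : B) :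
    shiftEquiv x (Finsupp.single y b) = Finsupp.single (y + x) b :=
  Finsupp.equivMapDomain_single _ _ _

theorem eq_zero_of_shiftEquiv_single_eq {B X : Type*} [AddCommGroup B] [AddCommGroup X]
    {x : X} (hx : x ≠ 0) {y : X} {b : B}
    (h : shiftEquiv x (Finsupp.single y b) = Finsupp.single y b) : b = 0 := by
  rw [shiftEquiv_single] at h
  have hy : y + x ≠ y := by simpa using hx
  simpa [Finsupp.single_apply, hy] using DFunLike.congr_fun h (y + x)

/-- In `G = B wr X` with `B, X` abelian, `X` torsion-free and nontrivial,
if `[A^m, X^m] = 1` for some `m ≥ 1` (every m-th power in the base group `A` is fixed by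
translation by every m-th power in `X`), then `A^m = 1`, i.e. `B` has exponent dividing `m`. -/
theorem stmt13 {B X : Type*} [AddCommGroup B] [AddCommGroup X] [Nontrivial X]
    (hX : AddMonoid.IsTorsionFree X) (m : ℕ) (hm : 1 ≤ m)
    (h : ∀ (a : X →₀ B) (x : X), shiftEquiv (m • x) (m • a) = m • a) :
    ∀ b : B, m • b = 0 := by
  intro b
  obtain ⟨x, hx⟩ := exists_ne (0 : X)
  have hmx : m • x ≠ 0 := hX.nsmul_ne_zero (by omega) hx
  have hfix := h (Finsupp.single 0 b) x
  rw [Finsupp.smul_single] at hfix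
  exact eq_zero_of_shiftEquiv_single_eq hmx hfix
end
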